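/- arXiv:1609.03643 — 3 statements merged into one kernel-verified Lean document; each statement's English description precedes it below -/
import Mathlib

section
/- The transitive-closure program is correct: the graph T obtained by applying 'link' as long as possible to a finite directed graph G is the smallest transitive supergraph of G on the same vertex set, i.e., T's edge relation equals the transitive closure of G's edge relation. -/
/-- One `link` step on simple directed graphs (edge relations on a fixed
vertex set): add the pair `(u, w)` when `(u, v)` and `(v, w)` are edges and
`(u, w)` is not. -/
def RelLinkStep {V : Type*} (E F : V → V → Prop) : Prop :=
  ∃ u v w : V, E u v ∧ E v w ∧ ¬ E u w ∧
    F = fun a b => E a b ∨ (a = u ∧ b = w)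

lemma step_sub {V : Type*} {A B : V → V → Prop} (h : RelLinkStep A B) :
    ∀ a b, A a b → B a b := by
  obtain ⟨u, v, w, _, _, _, rfl⟩ := h
  exact fun a b hab => Or.inl hab

lemma step_closure {V : Type*} {A B : V → V → Prop} (h : RelLinkStep A B) :
    ∀ a b, B a b → Relation.TransGen A a b := by
  obtain ⟨u, v, w, huv, hvw, _, rfl⟩ := h
  rintro a b (hab | ⟨rfl, rfl⟩)
  · exact Relation.TransGen.single hab
  · exact Relation.TransGen.head huv (Relation.TransGen.single hvw)

lemma reach_sub {V : Type*} {A B : V → V → Prop}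
    (h : Relation.ReflTransGen RelLinkStep A B) : ∀ a b, A a b → B a b := by
  induction h with
  | refl => exact fun a b h => h
  | tail _ hstep ih => exact fun a b h => step_sub hstep a b (ih a b h)

lemma reach_closure {V : Type*} {A B : V → V → Prop}
    (h : Relation.ReflTransGen RelLinkStep A B) :
    ∀ a b, B a b → Relation.TransGen A a b := by
  induction h with
  | refl => exact fun a b h => Relation.TransGen.single h
  | tail _ hstep ih =>
    intro a b h
    exact (step_closure hstep a b h).trans_induction_on
      (fun hab => ih _ _ hab) (fun _ _ => Relation.TransGen.trans)

/-- Correctness of the transitive closure program: a link-normal form `T`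
reachable from a finite simple digraph `G` has as edge relation exactly the
transitive closure of `G`'s edge relation. -/
theorem stmt_5 {V : Type*} [Fintype V] (E T : V → V → Prop)
    (hreach : Relation.ReflTransGen RelLinkStep E T)
    (hnf : ∀ F, ¬ RelLinkStep T F) :
    T = Relation.TransGen E := by
  have htrans : ∀ a b c, T a b → T b c → T a c := by
    intro a b c hab hbc
    by_contra hac
    exact hnf _ ⟨a, b, c, hab, hbc, hac, rfl⟩
  funext a b
  apply propext
  constructor
  · exact reach_closure hreach a b
  · intro h
    induction h with
    | single hab => exact reach_sub hreach _ _ hab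
    | tail _ hbc ih => exact htrans _ _ _ ih (reach_sub hreach _ _ hbc)
end

section
/- If G is a finite directed graph reachable from an all-1-coloured graph by inc-steps and M is an inc-normal form reachable from G, then M is a proper colouring of G's underlying graph using at most |V| colours, where each colour is in {1,...,|V|}. -/
/-- One `inc` step: increment the colour of one endpoint of an edge whose
two endpoints carry equal colours. -/
def IncStep {V : Type*} [DecidableEq V] (Adj : V → V → Prop) (c c' : V → ℕ) : Prop :=
  ∃ u v : V, Adj u v ∧ c u = c v ∧ c' = Function.update c v (c v + 1)

/-- If `G` is inc-reachable from the all-1 colouring and `M` is an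
inc-normal form reachable from `G`, then `M` is a proper colouring whose
colours all lie in `{1, …, |V|}`. -/
theorem stmt_18 {V : Type*} [Fintype V] [DecidableEq V] (Adj : V → V → Prop) (G M : V → ℕ)
    (h₁ : Relation.ReflTransGen (IncStep Adj) (fun _ => 1) G)
    (h₂ : Relation.ReflTransGen (IncStep Adj) G M)
    (hnf : ∀ c', ¬ IncStep Adj M c') :
    (∀ u v : V, Adj u v → M u ≠ M v) ∧
    (∀ v : V, M v ∈ Finset.Icc 1 (Fintype.card V)) := by
  have proper : ∀ u v : V, Adj u v → M u ≠ M v := by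
    intro u v huv heq
    exact hnf _ ⟨u, v, huv, heq, rfl⟩
  refine ⟨proper, ?_⟩
  have hirr : ∀ w : V, ¬ Adj w w := fun w hw => proper w w hw rfl
  -- Invariant: colours ≥ 1 and form an initial segment
  have hInv : ∀ c : V → ℕ, Relation.ReflTransGen (IncStep Adj) (fun _ => 1) c →
      (∀ v, 1 ≤ c v) ∧ (∀ v k, 1 ≤ k → k ≤ c v → ∃ w, c w = k) := by
    intro c hc
    induction hc with
    | refl => exact ⟨fun _ => le_refl 1, fun v k h1 h2 => ⟨v, (le_antisymm h2 h1).symm⟩⟩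
    | tail _ hstep ih =>
      obtain ⟨u, v, huv, heq, rfl⟩ := hstep
      obtain ⟨ih1, ih2⟩ := ih
      have huv' : u ≠ v := fun h => hirr v (h ▸ huv)
      rename_i b _
      constructor
      · intro x
        rcases eq_or_ne x v with rfl | hx
        · simp only [Function.update_self]; omega
        · simpa [Function.update_of_ne hx] using ih1 x
      · intro x k h1 h2
        have lift : (∃ w, b w = k) → ∃ w, Function.update b v (b v + 1) w = k := by
          rintro ⟨w, hw⟩
          rcases eq_or_ne w v with rfl | hwv
          · exact ⟨u, by rw [Function.update_of_ne huv', heq, hw]⟩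
          · exact ⟨w, by rw [Function.update_of_ne hwv, hw]⟩
        rcases eq_or_ne x v with rfl | hx
        · rw [Function.update_self] at h2
          rcases eq_or_lt_of_le h2 with hk' | hk'
          · exact ⟨x, by simp [hk'.symm]⟩
          · exact lift (ih2 x k h1 (by omega))
        · rw [Function.update_of_ne hx] at h2
          exact lift (ih2 x k h1 h2)
  obtain ⟨hM1, hM2⟩ := hInv M (h₁.trans h₂)
  intro v
  rw [Finset.mem_Icc]
  refine ⟨hM1 v, ?_⟩
  -- choose a witness for each colour 1..M v
  choose f hf using fun k (hk : k ∈ Finset.Icc 1 (M v)) =>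
    hM2 v k (Finset.mem_Icc.mp hk).1 (Finset.mem_Icc.mp hk).2
  have := Finset.card_le_card_of_injOn (s := Finset.Icc 1 (M v)) (t := Finset.univ) (fun k => if hk : k ∈ Finset.Icc 1 (M v) then f k hk else v)
    (fun _ _ => Finset.mem_univ _) ?_
  · simpa [Nat.card_Icc] using this
  · intro a ha b hb hab
    simp only [Finset.mem_coe] at ha hb
    simp only [ha, hb, dif_pos] at hab
    rw [← hf a ha, ← hf b hb, hab]
end

section
/- In the vertex colouring computed by exhaustively applying the inc rule to an all-1-coloured connected graph, every vertex with colour c > 1 is adjacent, at the moment its colour was last set, to a vertex enabling the increment; consequently the final colouring uses at most |V| colours, and moreover the sum of colours of the final graph is at most |V|(|V|+1)/2. -/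
open Finset

/-- Number of vertices with colour at least `k`. -/
def Ncnt {V : Type*} [Fintype V] (c : V → ℕ) (k : ℕ) : ℕ :=
  (Finset.univ.filter (fun v => k ≤ c v)).card

lemma inc_inv_step {V : Type*} [Fintype V] [DecidableEq V] {Adj : V → V → Prop}
    (hirr : ∀ w, ¬ Adj w w) {c c' : V → ℕ}
    (h : IncStep Adj c c')
    (hpos : ∀ v, 1 ≤ c v)
    (hinv : ∀ k, 1 ≤ k → 0 < Ncnt c (k + 1) → Ncnt c (k + 1) < Ncnt c k) :
    (∀ v, 1 ≤ c' v) ∧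
      (∀ k, 1 ≤ k → 0 < Ncnt c' (k + 1) → Ncnt c' (k + 1) < Ncnt c' k) := by
  obtain ⟨u, v, hadj, heq, rfl⟩ := h
  have huv : u ≠ v := by rintro rfl; exact hirr u hadj
  set a := c v with ha
  have hupd : ∀ w, Function.update c v (a + 1) w = if w = v then a + 1 else c w := by
    intro w
    by_cases hw : w = v
    · subst hw; simp
    · rw [Function.update_of_ne hw, if_neg hw]
  refine ⟨?_, ?_⟩
  · intro w
    rw [hupd w]
    split
    · omega
    · exact hpos w
  -- counting facts
  have hsame : ∀ k, k ≠ a + 1 → Ncnt (Function.update c v (a + 1)) k = Ncnt c k := by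
    intro k hk
    unfold Ncnt
    congr 1
    apply Finset.filter_congr
    intro w _
    rw [hupd w]
    by_cases hw : w = v
    · subst hw
      rw [if_pos rfl]
      constructor <;> intro <;> omega
    · rw [if_neg hw]
  have hvS : v ∉ Finset.univ.filter (fun w => a + 1 ≤ c w) := by
    simp only [Finset.mem_filter, Finset.mem_univ, true_and]
    omega
  have hbump : Ncnt (Function.update c v (a + 1)) (a + 1) = Ncnt c (a + 1) + 1 := by
    unfold Ncnt
    have hset : (Finset.univ.filter (fun w => a + 1 ≤ Function.update c v (a + 1) w))
        = insert v (Finset.univ.filter (fun w => a + 1 ≤ c w)) := by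
      ext w
      simp only [Finset.mem_filter, Finset.mem_univ, true_and, Finset.mem_insert]
      rw [hupd w]
      by_cases hw : w = v
      · subst hw; rw [if_pos rfl]; simp
      · rw [if_neg hw]; simp [hw]
    rw [hset, Finset.card_insert_of_notMem hvS]
  have hkey : Ncnt c (a + 1) + 2 ≤ Ncnt c a := by
    have huS : u ∉ insert v (Finset.univ.filter (fun w => a + 1 ≤ c w)) := by
      simp only [Finset.mem_insert, Finset.mem_filter, Finset.mem_univ, true_and]
      push_neg
      exact ⟨huv, by omega⟩
    have hsub : insert u (insert v (Finset.univ.filter (fun w => a + 1 ≤ c w)))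
        ⊆ Finset.univ.filter (fun w => a ≤ c w) := by
      intro w hw
      simp only [Finset.mem_insert, Finset.mem_filter, Finset.mem_univ, true_and] at hw ⊢
      rcases hw with rfl | rfl | hw
      · omega
      · omega
      · omega
    have hc := Finset.card_le_card hsub
    rw [Finset.card_insert_of_notMem huS, Finset.card_insert_of_notMem hvS] at hc
    unfold Ncnt
    omega
  intro k hk hkpos
  by_cases hka : k = a
  · subst hka
    rw [hbump, hsame a (by omega)]
    omega
  · by_cases hka1 : k = a + 1
    · subst hka1
      rw [hsame (a + 1 + 1) (by omega)] at hkpos ⊢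
      rw [hbump]
      have := hinv (a + 1) (by omega) hkpos
      omega
    · rw [hsame (k + 1) (by omega)] at hkpos ⊢
      rw [hsame k hka1]
      exact hinv k hk hkpos

lemma inc_inv_reach {V : Type*} [Fintype V] [DecidableEq V] {Adj : V → V → Prop}
    (hirr : ∀ w, ¬ Adj w w) {M : V → ℕ}
    (hreach : Relation.ReflTransGen (IncStep Adj) (fun _ => 1) M) :
    (∀ v, 1 ≤ M v) ∧
      (∀ k, 1 ≤ k → 0 < Ncnt M (k + 1) → Ncnt M (k + 1) < Ncnt M k) := by
  induction hreach with
  | refl =>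
      refine ⟨fun v => le_refl 1, fun k hk hkpos => ?_⟩
      unfold Ncnt at hkpos
      rw [Finset.card_pos] at hkpos
      obtain ⟨w, hw⟩ := hkpos
      simp only [Finset.mem_filter, Finset.mem_univ, true_and] at hw
      omega
  | tail _ hbc ih =>
      exact inc_inv_step hirr hbc ih.1 ih.2

lemma gauss_aux : ∀ n : ℕ, 2 * (∑ k ∈ Finset.Icc 1 n, (n + 1 - k)) = n * (n + 1) := by
  intro n
  induction n with
  | zero => simp
  | succ n ih =>
      rw [Finset.sum_Icc_succ_top (by omega : 1 ≤ n + 1)]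
      have hstep : ∑ k ∈ Finset.Icc 1 n, (n + 1 + 1 - k)
          = (∑ k ∈ Finset.Icc 1 n, (n + 1 - k)) + n := by
        have h1 : ∀ k ∈ Finset.Icc 1 n, n + 1 + 1 - k = (n + 1 - k) + 1 := by
          intro k hk
          simp only [Finset.mem_Icc] at hk
          omega
        rw [Finset.sum_congr rfl h1, Finset.sum_add_distrib]
        simp [Nat.card_Icc]
      rw [hstep]
      have hr : (n + 1) * (n + 1 + 1) = n * (n + 1) + 2 * (n + 1) := by ring
      omega

/-- For an inc-normal form `M` reached from the all-1 colouring of a finite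
connected graph: whenever a step changed the colour of a vertex, that vertex
was at that moment adjacent to a vertex of equal colour (enabling the
increment); consequently the final colouring uses at most `|V|` colours and
the sum of the final colours is at most `|V|(|V|+1)/2`. -/
theorem stmt_19 {V : Type*} [Fintype V] [DecidableEq V] (Adj : V → V → Prop)
    (hsymm : Symmetric Adj)
    (hconn : ∀ u v : V, Relation.ReflTransGen Adj u v)
    (M : V → ℕ)
    (hreach : Relation.ReflTransGen (IncStep Adj) (fun _ => 1) M)
    (hnf : ∀ c', ¬ IncStep Adj M c') :
    (∀ c c' : V → ℕ, IncStep Adj c c' → ∀ v : V, c' v ≠ c v →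
      ∃ u : V, Adj u v ∧ c u = c v) ∧
    (Finset.univ.image M).card ≤ Fintype.card V ∧
    ∑ v : V, M v ≤ Fintype.card V * (Fintype.card V + 1) / 2 := by
  have hirr : ∀ w : V, ¬ Adj w w := fun w hw =>
    hnf _ ⟨w, w, hw, rfl, rfl⟩
  obtain ⟨hpos, hinv⟩ := inc_inv_reach hirr hreach
  set n := Fintype.card V with hn
  -- decreasing counts
  have hcount : ∀ k : ℕ, Ncnt M (k + 1) ≤ n - k := by
    intro k
    induction k with
    | zero =>
        have : Ncnt M 1 ≤ n := by
          unfold Ncnt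
          simpa [hn] using Finset.card_filter_le Finset.univ (fun v => 1 ≤ M v)
        simpa using this
    | succ k ih =>
        by_cases h0 : 0 < Ncnt M (k + 1 + 1)
        · have := hinv (k + 1) (by omega) h0
          omega
        · omega
  have hMn : ∀ v : V, M v ≤ n := by
    intro v
    have hv : 0 < Ncnt M (M v) := by
      unfold Ncnt
      rw [Finset.card_pos]
      exact ⟨v, by simp⟩
    have h1 : 1 ≤ M v := hpos v
    have h2 := hcount (M v - 1)
    rw [Nat.sub_add_cancel h1] at h2
    omega
  refine ⟨?_, ?_, ?_⟩
  · rintro c c' ⟨u, w, hadj, heq, rfl⟩ v hv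
    have hvw : v = w := by
      by_contra hne
      exact hv (Function.update_of_ne hne _ _)
    subst hvw
    exact ⟨u, hadj, heq⟩
  · calc (Finset.univ.image M).card ≤ Finset.univ.card := Finset.card_image_le
      _ = Fintype.card V := Finset.card_univ
  · have hsum : ∑ v : V, M v = ∑ k ∈ Finset.Icc 1 n, Ncnt M k := by
      have h1 : ∀ v : V, M v = ((Finset.Icc 1 n).filter (fun k => k ≤ M v)).card := by
        intro v
        have hset : (Finset.Icc 1 n).filter (fun k => k ≤ M v) = Finset.Icc 1 (M v) := by
          ext k
          simp only [Finset.mem_filter, Finset.mem_Icc]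
          have := hMn v
          omega
        rw [hset, Nat.card_Icc]
        omega
      calc ∑ v : V, M v = ∑ v : V, ((Finset.Icc 1 n).filter (fun k => k ≤ M v)).card :=
            Finset.sum_congr rfl (fun v _ => h1 v)
        _ = ∑ v : V, ∑ k ∈ Finset.Icc 1 n, if k ≤ M v then 1 else 0 := by
            simp only [Finset.card_filter]
        _ = ∑ k ∈ Finset.Icc 1 n, ∑ v : V, if k ≤ M v then 1 else 0 := Finset.sum_comm
        _ = ∑ k ∈ Finset.Icc 1 n, Ncnt M k := by
            apply Finset.sum_congr rfl
            intro k _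
            unfold Ncnt
            rw [Finset.card_filter]
    rw [hsum]
    have hle : ∑ k ∈ Finset.Icc 1 n, Ncnt M k ≤ ∑ k ∈ Finset.Icc 1 n, (n + 1 - k) := by
      apply Finset.sum_le_sum
      intro k hk
      simp only [Finset.mem_Icc] at hk
      have h2 := hcount (k - 1)
      rw [Nat.sub_add_cancel hk.1] at h2
      omega
    have hg := gauss_aux n
    omega
end
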